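/- Let (X_n)_{n∈ℕ} be a sequence of nonzero real or complex Banach spaces. If the ℓ^1-sum ℓ^1((X_n)_{n∈ℕ}) (sequences (x_n) with x_n ∈ X_n and norm Σ_n ‖x_n‖ < ∞) is lush, then each X_n is lush. -/

import Mathlib

open scoped BigOperators

/-- The open slice `S(B_X, f, α) = {x ∈ B_X : Re f(x) > 1 - α}` of the closed unit ball. -/
def Slice (𝕜 : Type*) {X : Type*} [RCLike 𝕜] [NormedAddCommGroup X] [NormedSpace 𝕜 X]
    (f : X →L[𝕜] 𝕜) (α : ℝ) : Set X :=
  {x | ‖x‖ ≤ 1 ∧ 1 - α < RCLike.re (f x)}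

/-- The convex hull of `𝕋 · S(B_X, f, α)`, i.e. all convex combinations of rotated points of
the slice `S(B_X, f, α)`. -/
def ConvRotSlice (𝕜 : Type*) {X : Type*} [RCLike 𝕜] [NormedAddCommGroup X] [NormedSpace 𝕜 X]
    (f : X →L[𝕜] 𝕜) (α : ℝ) : Set X :=
  {x | ∃ (n : ℕ) (t : Fin n → ℝ) (ω : Fin n → 𝕜) (s : Fin n → X),
    (∀ k, 0 ≤ t k) ∧ (∑ k, t k) = 1 ∧ (∀ k, ‖ω k‖ = 1) ∧ (∀ k, s k ∈ Slice 𝕜 f α) ∧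
    x = ∑ k, ((t k : 𝕜) * ω k) • s k}

/-- A Banach space `X` over `𝕜 = ℝ` or `ℂ` is *lush* if for all `u, v` in the unit sphere and
every `ε > 0` there is a norm-one functional `f` with `u ∈ S(B_X, f, ε)` and
`dist(v, conv(𝕋 · S(B_X, f, ε))) < ε`. -/
def IsLush (𝕜 X : Type*) [RCLike 𝕜] [NormedAddCommGroup X] [NormedSpace 𝕜 X] : Prop :=
  ∀ u v : X, ‖u‖ = 1 → ‖v‖ = 1 → ∀ ε : ℝ, 0 < ε →
    ∃ f : X →L[𝕜] 𝕜, ‖f‖ = 1 ∧ u ∈ Slice 𝕜 f ε ∧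
      Metric.infDist v (ConvRotSlice 𝕜 f ε) < ε

/-!
The coordinate space `X = X n` is an L-summand of `Y = ℓ¹((X n))`: with the inclusion `J` and the
evaluation `P` one has `‖y‖ = ‖P y‖ + ‖y - J (P y)‖`. Given `u, v ∈ S_X`, lushness of `Y` at
`J u, J v` gives `F`, and we use `g = F ∘ J` (normalized at the very end). A point `s` of a slice of
`F` projects to a point `P s` of the unit ball on which `g` almost attains its norm, so `P` carries
the convex combination `y ≈ J v` to a convex combination of rotations of such points, of norm close
to `1`. Rescaling the points of norm close to `1` puts them into a slice of `g`; the remaining ones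
carry little weight because `‖P y‖ ≈ 1`. Since `x ↦ δ * dist(x, C) + ‖x‖` is convex, this
estimate passes from the rotated points to their convex hull.
-/

open Metric
open scoped Pointwise

section Slices

variable {𝕜 X : Type*} [RCLike 𝕜] [NormedAddCommGroup X] [NormedSpace 𝕜 X]

theorem slice_mono {f : X →L[𝕜] 𝕜} {α β : ℝ} (h : α ≤ β) : Slice 𝕜 f α ⊆ Slice 𝕜 f β :=
  fun _ hx ↦ ⟨hx.1, by linarith [hx.2]⟩

theorem convRotSlice_mono {f g : X →L[𝕜] 𝕜} {α β : ℝ} (h : Slice 𝕜 f α ⊆ Slice 𝕜 g β) :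
    ConvRotSlice 𝕜 f α ⊆ ConvRotSlice 𝕜 g β :=
  fun _ ⟨n, t, ω, s, ht0, ht1, hω, hs, hx⟩ ↦ ⟨n, t, ω, s, ht0, ht1, hω, fun k ↦ h (hs k), hx⟩

theorem slice_subset_slice_smul (g : X →L[𝕜] 𝕜) {c β : ℝ} (hc : 1 ≤ c) (hβ : β ≤ 1) :
    Slice 𝕜 g β ⊆ Slice 𝕜 ((c : 𝕜) • g) β := by
  rintro x ⟨hx, hgx⟩
  refine ⟨hx, ?_⟩
  rw [smul_apply, smul_eq_mul, RCLike.re_ofReal_mul]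
  nlinarith

theorem slice_subset_convRotSlice (f : X →L[𝕜] 𝕜) (α : ℝ) :
    Slice 𝕜 f α ⊆ ConvRotSlice 𝕜 f α :=
  fun x hx ↦ ⟨1, 1, 1, fun _ ↦ x, fun _ ↦ zero_le_one, by simp, fun _ ↦ by simp, fun _ ↦ hx,
    by simp⟩

theorem isLush_of_forall_exists_norm_le_one
    (H : ∀ u v : X, ‖u‖ = 1 → ‖v‖ = 1 → ∀ ε : ℝ, 0 < ε → ε < 1 →
      ∃ g : X →L[𝕜] 𝕜, ‖g‖ ≤ 1 ∧ u ∈ Slice 𝕜 g ε ∧ infDist v (ConvRotSlice 𝕜 g ε) < ε) :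
    IsLush 𝕜 X := by
  intro u v hu hv ε hε
  set ε' := min ε (1 / 2)
  have hε'ε : ε' ≤ ε := min_le_left _ _
  have hε'1 : ε' ≤ 1 / 2 := min_le_right _ _
  obtain ⟨g, hg, hug, hvg⟩ := H u v hu hv ε' (by positivity) (by linarith)
  have hg0 : 0 < ‖g‖ := by
    have := (RCLike.re_le_norm (g u)).trans (g.le_opNorm u)
    rw [hu, mul_one] at this
    linarith [hug.2]
  have hsub : Slice 𝕜 g ε' ⊆ Slice 𝕜 (((‖g‖⁻¹ : ℝ) : 𝕜) • g) ε :=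
    (slice_subset_slice_smul g ((one_le_inv₀ hg0).2 hg) (by linarith)).trans (slice_mono hε'ε)
  refine ⟨_, ?_, hsub hug, ?_⟩
  · rw [norm_smul, RCLike.norm_ofReal, abs_of_pos (inv_pos.2 hg0), inv_mul_cancel₀ hg0.ne']
  · calc infDist v (ConvRotSlice 𝕜 _ ε)
        ≤ infDist v (ConvRotSlice 𝕜 g ε') :=
          infDist_le_infDist_of_subset (convRotSlice_mono hsub)
            ⟨u, slice_subset_convRotSlice g ε' hug⟩
      _ < ε := hvg.trans_le hε'ε

variable [NormedSpace ℝ X] [IsScalarTower ℝ 𝕜 X]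

theorem convRotSlice_eq_convexHull (f : X →L[𝕜] 𝕜) (α : ℝ) :
    ConvRotSlice 𝕜 f α = convexHull ℝ (sphere (0 : 𝕜) 1 • Slice 𝕜 f α) := by
  ext x
  constructor
  · rintro ⟨n, t, ω, s, ht0, ht1, hω, hs, rfl⟩
    refine mem_convexHull_of_exists_fintype t (fun k ↦ ω k • s k) ht0 ht1
      (fun k ↦ Set.smul_mem_smul (by simpa using hω k) (hs k)) ?_
    simp only [mul_smul, RCLike.real_smul_eq_coe_smul (K := 𝕜)]
  · rw [mem_convexHull_iff_exists_fintype]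
    rintro ⟨ι, _, t, z, ht0, ht1, hz, rfl⟩
    choose ω hω s hs hωs using hz
    let e := Fintype.equivFin ι
    refine ⟨Fintype.card ι, t ∘ e.symm, ω ∘ e.symm, s ∘ e.symm, fun k ↦ ht0 _, ?_,
      fun k ↦ by simpa using hω _, fun k ↦ hs _, ?_⟩
    · rwa [← e.symm.sum_comp] at ht1
    · rw [← e.symm.sum_comp]
      simp only [Function.comp_apply, mul_smul, ← RCLike.real_smul_eq_coe_smul (K := 𝕜), hωs]

theorem convex_convRotSlice (f : X →L[𝕜] 𝕜) (α : ℝ) : Convex ℝ (ConvRotSlice 𝕜 f α) :=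
  convRotSlice_eq_convexHull f α ▸ convex_convexHull ℝ _

theorem closedBall_smul_subset_convexHull_sphere_smul (S : Set X) :
    closedBall (0 : 𝕜) 1 • S ⊆ convexHull ℝ (sphere (0 : 𝕜) 1 • S) := by
  rintro _ ⟨μ, hμ, s, hs, rfl⟩
  let L : 𝕜 →ₗ[ℝ] X := (LinearMap.toSpanSingleton 𝕜 X s).restrictScalars ℝ
  have : μ • s ∈ L '' convexHull ℝ (sphere 0 1) := by
    rw [convexHull_sphere_eq_closedBall 0 zero_le_one]
    exact ⟨μ, hμ, rfl⟩
  rw [L.image_convexHull] at this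
  exact convexHull_mono (by rintro _ ⟨ω, hω, rfl⟩; exact Set.smul_mem_smul hω hs) this

end Slices

theorem Convex.setOf_exists_mem_mul_norm_sub_add_norm_le {E : Type*} [SeminormedAddCommGroup E]
    [NormedSpace ℝ E] {C : Set E} (hC : Convex ℝ C) {δ : ℝ} (hδ : 0 ≤ δ) (r : ℝ) :
    Convex ℝ {x | ∃ z ∈ C, δ * ‖x - z‖ + ‖x‖ ≤ r} := by
  rintro x ⟨z, hz, hxz⟩ y ⟨w, hw, hyw⟩ a b ha hb hab
  refine ⟨a • z + b • w, hC hz hw ha hb hab, ?_⟩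
  have hsub : a • x + b • y - (a • z + b • w) = a • (x - z) + b • (y - w) := by
    simp only [smul_sub]; abel
  have h1 := norm_add_le_of_le (norm_smul_le a (x - z)) (norm_smul_le b (y - w))
  have h2 := norm_add_le_of_le (norm_smul_le a x) (norm_smul_le b y)
  rw [← hsub] at h1
  simp only [Real.norm_of_nonneg ha, Real.norm_of_nonneg hb] at h1 h2
  calc δ * ‖a • x + b • y - (a • z + b • w)‖ + ‖a • x + b • y‖
      ≤ a * (δ * ‖x - z‖ + ‖x‖) + b * (δ * ‖y - w‖ + ‖y‖) := by nlinarith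
    _ ≤ a * r + b * r := by gcongr
    _ = r := by rw [← add_mul, hab, one_mul]

section AlmostNorming

variable {𝕜 X : Type*} [RCLike 𝕜] [NormedAddCommGroup X] [NormedSpace 𝕜 X]

variable (𝕜) in
def AlmostNorming (g : X →L[𝕜] 𝕜) (η : ℝ) : Set X :=
  {x | ‖x‖ ≤ 1 ∧ ‖x‖ - η < RCLike.re (g x)}

variable {g : X →L[𝕜] 𝕜} {u : X} {α δ η : ℝ}

theorem exists_mem_closedBall_smul_slice_near {x : X} (hx : x ∈ AlmostNorming 𝕜 g η)
    (hu : u ∈ Slice 𝕜 g α) (hδ : 0 < δ) (hδη : δ + η ≤ α) (hα : α ≤ 1) :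
    ∃ z ∈ closedBall (0 : 𝕜) 1 • Slice 𝕜 g α, δ * ‖x - z‖ ≤ 1 - ‖x‖ := by
  obtain ⟨hx1, hgx⟩ := hx
  by_cases hlarge : 1 - δ < ‖x‖
  · have hre : 0 ≤ RCLike.re (g x) := by linarith
    have hx0 : 0 < ‖x‖ := norm_pos_iff.2 fun h ↦ by
      subst h
      simp only [norm_zero, zero_sub, map_zero, Left.neg_neg_iff, sub_neg] at hgx hlarge
      linarith
    refine ⟨x, ⟨(‖x‖ : 𝕜), by simpa using hx1, ((‖x‖⁻¹ : ℝ) : 𝕜) • x, ?_, ?_⟩, by simpa⟩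
    · have hslice := slice_subset_slice_smul g ((one_le_inv₀ hx0).2 hx1) hα
        (show x ∈ Slice 𝕜 g α from ⟨hx1, by linarith⟩)
      refine ⟨?_, by simpa using hslice.2⟩
      rw [norm_smul, RCLike.norm_ofReal, abs_of_pos (inv_pos.2 hx0), inv_mul_cancel₀ hx0.ne']
    · dsimp only
      rw [smul_smul, ← RCLike.ofReal_mul, mul_inv_cancel₀ hx0.ne', RCLike.ofReal_one, one_smul]
  · refine ⟨0, ⟨0, by simp, u, hu, zero_smul 𝕜 u⟩, ?_⟩
    rw [sub_zero]
    nlinarith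

variable [NormedSpace ℝ X] [IsScalarTower ℝ 𝕜 X]

theorem exists_mem_convRotSlice_near {x : X}
    (hx : x ∈ convexHull ℝ (sphere (0 : 𝕜) 1 • AlmostNorming 𝕜 g η))
    (hu : u ∈ Slice 𝕜 g α) (hδ : 0 < δ) (hδη : δ + η ≤ α) (hα : α ≤ 1) :
    ∃ z ∈ ConvRotSlice 𝕜 g α, δ * ‖x - z‖ ≤ 1 - ‖x‖ := by
  suffices x ∈ {x | ∃ z ∈ ConvRotSlice 𝕜 g α, δ * ‖x - z‖ + ‖x‖ ≤ 1} by
    obtain ⟨z, hz, h⟩ := this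
    exact ⟨z, hz, by linarith⟩
  refine convexHull_min ?_
    ((convex_convRotSlice g α).setOf_exists_mem_mul_norm_sub_add_norm_le hδ.le 1) hx
  rintro _ ⟨ω, hω, y, hy, rfl⟩
  obtain ⟨_, ⟨μ, hμ, s, hs, rfl⟩, hys⟩ := exists_mem_closedBall_smul_slice_near hy hu hδ hδη hα
  rw [mem_sphere_zero_iff_norm] at hω
  refine ⟨(ω * μ) • s, ?_, ?_⟩
  · rw [convRotSlice_eq_convexHull]
    refine closedBall_smul_subset_convexHull_sphere_smul _ (Set.smul_mem_smul ?_ hs)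
    simpa [hω] using hμ
  · rw [mul_smul, ← smul_sub, norm_smul, norm_smul, hω, one_mul, one_mul]
    linarith

end AlmostNorming

section LSummand

variable {𝕜 X Y : Type*} [RCLike 𝕜] [NormedAddCommGroup X] [NormedSpace 𝕜 X]
  [NormedAddCommGroup Y] [NormedSpace 𝕜 Y] {J : X →L[𝕜] Y} {P : Y →L[𝕜] X}
  {F : Y →L[𝕜] 𝕜} {η : ℝ}

theorem apply_mem_almostNorming_of_mem_slice (hL : ∀ y, ‖y‖ = ‖P y‖ + ‖y - J (P y)‖)
    (hF : ‖F‖ ≤ 1) {s : Y} (hs : s ∈ Slice 𝕜 F η) : P s ∈ AlmostNorming 𝕜 (F.comp J) η := by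
  obtain ⟨hs1, hFs⟩ := hs
  have hL' := hL s
  have hcompl : RCLike.re (F (s - J (P s))) ≤ ‖s - J (P s)‖ :=
    (RCLike.re_le_norm _).trans ((F.le_opNorm _).trans (mul_le_of_le_one_left (norm_nonneg _) hF))
  rw [map_sub, map_sub] at hcompl
  refine ⟨by linarith [norm_nonneg (s - J (P s))], ?_⟩
  rw [ContinuousLinearMap.comp_apply]
  linarith

variable [NormedSpace ℝ X] [IsScalarTower ℝ 𝕜 X] [NormedSpace ℝ Y] [IsScalarTower ℝ 𝕜 Y]

theorem image_convRotSlice_subset (hL : ∀ y, ‖y‖ = ‖P y‖ + ‖y - J (P y)‖) (hF : ‖F‖ ≤ 1) :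
    P '' ConvRotSlice 𝕜 F η ⊆ convexHull ℝ (sphere (0 : 𝕜) 1 • AlmostNorming 𝕜 (F.comp J) η) := by
  change (P.toLinearMap.restrictScalars ℝ) '' _ ⊆ _
  rw [convRotSlice_eq_convexHull, LinearMap.image_convexHull]
  refine convexHull_mono ?_
  rintro _ ⟨_, ⟨ω, hω, s, hs, rfl⟩, rfl⟩
  exact ⟨ω, hω, P s, apply_mem_almostNorming_of_mem_slice hL hF hs, (map_smul P ω s).symm⟩

end LSummand

theorem IsLush.of_lSummand {𝕜 X Y : Type*} [RCLike 𝕜] [NormedAddCommGroup X] [NormedSpace 𝕜 X]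
    [NormedAddCommGroup Y] [NormedSpace 𝕜 Y] (hY : IsLush 𝕜 Y) (J : X →L[𝕜] Y)
    (P : Y →L[𝕜] X) (hPJ : ∀ x, P (J x) = x) (hL : ∀ y, ‖y‖ = ‖P y‖ + ‖y - J (P y)‖) :
    IsLush 𝕜 X := by
  let := NormedSpace.restrictScalars ℝ 𝕜 X
  have := IsScalarTower.restrictScalars ℝ 𝕜 X
  let := NormedSpace.restrictScalars ℝ 𝕜 Y
  have := IsScalarTower.restrictScalars ℝ 𝕜 Y
  have hJ (x : X) : ‖J x‖ = ‖x‖ := by simpa [hPJ] using hL (J x)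
  have hP (y : Y) : ‖P y‖ ≤ ‖y‖ := by linarith [hL y, norm_nonneg (y - J (P y))]
  refine isLush_of_forall_exists_norm_le_one fun u v hu hv ε hε hε1 ↦ ?_
  -- with `δ = ε / 2` below, the final error is `< η + η / δ = ε ^ 2 / 4 + ε / 2 < ε`
  obtain ⟨η, hη⟩ : ∃ η : ℝ, η = ε ^ 2 / 4 := ⟨_, rfl⟩
  obtain ⟨F, hF, huF, hvF⟩ :=
    hY (J u) (J v) (by rw [hJ, hu]) (by rw [hJ, hv]) η (by rw [hη]; positivity)
  have hηε : η ≤ ε / 4 := by nlinarith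
  have huε : u ∈ Slice 𝕜 (F.comp J) ε := slice_mono (by linarith) ⟨hu.le, huF.2⟩
  refine ⟨F.comp J, ?_, huε, ?_⟩
  · refine ContinuousLinearMap.opNorm_le_bound _ zero_le_one fun x ↦ ?_
    simpa [hF, hJ] using F.le_opNorm (J x)
  obtain ⟨y, hy, hvy⟩ := (infDist_lt_iff ⟨J u, slice_subset_convRotSlice F η huF⟩).1 hvF
  have hvPy : ‖v - P y‖ < η := by
    calc ‖v - P y‖ = ‖P (J v - y)‖ := by rw [map_sub, hPJ]
      _ ≤ ‖J v - y‖ := hP _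
      _ < η := by rwa [← dist_eq_norm]
  obtain ⟨z, hz, hPyz⟩ := exists_mem_convRotSlice_near
    (image_convRotSlice_subset hL hF.le ⟨y, hy, rfl⟩) huε (half_pos hε) (by linarith) hε1.le
  have hPy : 1 - η < ‖P y‖ := by linarith [norm_sub_norm_le v (P y)]
  have hPyz' : ‖P y - z‖ < ε / 2 :=
    lt_of_mul_lt_mul_left (a := ε / 2) (by nlinarith) (by positivity)
  calc infDist v (ConvRotSlice 𝕜 (F.comp J) ε) ≤ dist v z := infDist_le_dist_of_mem hz
    _ ≤ ‖v - P y‖ + ‖P y - z‖ := by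
      rw [dist_eq_norm]
      exact norm_sub_le_norm_sub_add_norm_sub _ _ _
    _ < ε := by linarith

theorem lp.norm_eq_norm_apply_add_norm_sub_single {α : Type*} {E : α → Type*}
    [∀ i, NormedAddCommGroup (E i)] [DecidableEq α] (f : lp E 1) (i : α) :
    ‖f‖ = ‖f i‖ + ‖f - lp.single 1 i (f i)‖ := by
  have := lp.norm_compl_sum_single (p := 1) (by simp) f {i}
  simp only [Finset.sum_singleton, ENNReal.toReal_one, Real.rpow_one] at this
  linarith

theorem isLush_of_isLush_lpOne_general {𝕜 : Type*} [RCLike 𝕜] {X : ℕ → Type*}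
    [∀ n, NormedAddCommGroup (X n)] [∀ n, NormedSpace 𝕜 (X n)]
    (h : IsLush 𝕜 (lp X 1)) : ∀ n, IsLush 𝕜 (X n) := fun n ↦
  h.of_lSummand (lp.singleContinuousLinearMap 𝕜 X 1 n) (lp.evalCLM 𝕜 X 1 n)
    (lp.single_apply_self 1 n) (fun f ↦ lp.norm_eq_norm_apply_add_norm_sub_single f n)

/-- If the ℓ^1-sum of a sequence of nonzero Banach spaces is lush, then each summand is lush. -/
theorem isLush_of_isLush_lpOne {𝕜 : Type*} [RCLike 𝕜] {X : ℕ → Type*}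
    [∀ n, NormedAddCommGroup (X n)] [∀ n, NormedSpace 𝕜 (X n)]
    [∀ n, CompleteSpace (X n)] [∀ n, Nontrivial (X n)]
    (h : IsLush 𝕜 (lp X 1)) : ∀ n, IsLush 𝕜 (X n) :=
  isLush_of_isLush_lpOne_general h
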